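/- Let β be a partition with at most one part equal to 1, all other parts even with multiplicity at most 2, and an even number of parts if no part equals 1. Let δ be the subpartition of parts on which f takes the value 0. If δ violates the difference condition, then β contains a bad sequence: there is an even index i with β_i = β_{i+1} > β_{i+2} = β_{i+3}, β_{i+1} − β_{i+2} = 2, and β_{i+2} ≠ 0. -/

import Mathlib

namespace Duckworth

/-- The recursive map `f` of Definition 1.4, computed along the list of parts.
`bk` is the value of the last part mapped to 1 (`none` if there is none yet),
`l` is the number of parts so far mapped to 1, `i` the number mapped to 0. -/
def fGo : Option ℕ → ℕ → ℕ → List ℕ → List Bool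
  | _, _, _, [] => []
  | bk, l, i, b :: rest =>
    let b1 := rest.getD 0 0
    let b3 := rest.getD 2 0
    let lEven := l % 2 == 0
    let iOdd := i % 2 == 1
    let c1 := lEven && decide (bk.getD (b + 3) ≤ b + 2)
    let c2 := lEven && iOdd && decide (b1 ≤ 1)
    let c3 := lEven && iOdd && decide (b1 ≤ b3 + 2) && decide (b3 ≠ 0) &&
      decide (b3 + 3 ≤ b)
    if c1 || c2 || c3 then
      false :: fGo bk l (i + 1) rest
    else
      true :: fGo (some b) (l + 1) i rest

/-- The list of `f`-values of the parts of `β` (in order). -/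
def fList (β : List ℕ) : List Bool := fGo none 0 0 β

/-- The sublist of parts of `β` whose `f`-value is `v`. -/
def selectBy (β : List ℕ) (v : Bool) : List ℕ :=
  ((β.zip (fList β)).filter (fun p => p.2 == v)).map Prod.fst

/-- `β⁽¹⁾`: the parts with `f`-value 1. -/
def beta1 (β : List ℕ) : List ℕ := selectBy β true

/-- `δ`: the parts with `f`-value 0. -/
def delta (β : List ℕ) : List ℕ := selectBy β false

/-- `β⁽²⁾`: the parts of `δ` with `f`-value 1. -/
def beta2 (β : List ℕ) : List ℕ := selectBy (delta β) true

/-- `β⁽³⁾`: the parts of `δ` with `f`-value 0. -/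
def beta3 (β : List ℕ) : List ℕ := selectBy (delta β) false

/-- A partition: a weakly decreasing list of positive integers. -/
def IsPartition (β : List ℕ) : Prop :=
  β.Pairwise (· ≥ ·) ∧ ∀ x ∈ β, 0 < x

/-- The `i`-th part (1-based); parts beyond the length are 0. -/
def part (β : List ℕ) (i : ℕ) : ℕ := β.getD (i - 1) 0

/-- The difference condition: for every even index `i` with `β_{i+1} ≥ 1`,
`β_i − β_{i+1} ≥ 3`. -/
def DiffCond (β : List ℕ) : Prop :=
  ∀ i, 0 < i → i % 2 = 0 → 1 ≤ part β (i + 1) → part β (i + 1) + 3 ≤ part β i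

/-- Hypotheses of Proposition 4.5: at most one part equal to 1, all other parts
even with multiplicity at most 2, and an even number of parts if no part is 1. -/
def GoodBeta (β : List ℕ) : Prop :=
  IsPartition β ∧ β.count 1 ≤ 1 ∧
  (∀ x ∈ β, x ≠ 1 → 2 ∣ x ∧ β.count x ≤ 2) ∧
  (1 ∉ β → 2 ∣ β.length)

/-- A bad sequence: an even index `i` with
`β_i = β_{i+1} > β_{i+2} = β_{i+3}`, `β_{i+1} − β_{i+2} = 2`, `β_{i+2} ≠ 0`. -/
def BadSeq (β : List ℕ) : Prop :=
  ∃ i, 0 < i ∧ i % 2 = 0 ∧ part β i = part β (i + 1) ∧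
    part β (i + 1) = part β (i + 2) + 2 ∧
    part β (i + 2) = part β (i + 3) ∧ part β (i + 2) ≠ 0

/-- The dual (conjugate) partition: `λ*_i = #{j : λ_j ≥ i}`. -/
def dual (β : List ℕ) : List ℕ :=
  (List.range (β.foldr max 0)).map (fun i => β.countP (fun x => decide (i + 1 ≤ x)))

lemma getD_drop (β : List ℕ) (q t : ℕ) : (β.drop q).getD t 0 = β.getD (q + t) 0 := by
  simp [List.getD_eq_getElem?_getD, List.getElem?_drop]

lemma part_drop (β : List ℕ) (q t : ℕ) : part β (q + t + 1) = (β.drop q).getD t 0 := by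
  simp [part, getD_drop]

lemma sorted_le {β : List ℕ} (hs : β.Pairwise (· ≥ ·)) {i j : ℕ} (hij : i ≤ j) (hj : j < β.length) :
    β[j]'hj ≤ β[i]'(by omega) := by
  rcases Nat.eq_or_lt_of_le hij with h | h
  · subst h; exact le_refl _
  · exact List.pairwise_iff_getElem.mp hs i j (by omega) hj h

lemma part_mono {β : List ℕ} (hs : β.Pairwise (· ≥ ·)) {a b : ℕ} (ha : 1 ≤ a) (hab : a ≤ b) :
    part β b ≤ part β a := by
  unfold part
  by_cases hb : b - 1 < β.length
  · rw [List.getD_eq_getElem _ _ hb, List.getD_eq_getElem _ _ (show a - 1 < β.length by omega)]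
    exact sorted_le hs (by omega) hb
  · rw [List.getD_eq_default _ _ (by omega)]
    exact Nat.zero_le _

lemma part_pos {β : List ℕ} (hβ : ∀ x ∈ β, 0 < x) {j : ℕ} (h1 : 1 ≤ j) (h2 : j ≤ β.length) :
    1 ≤ part β j := by
  unfold part
  rw [List.getD_eq_getElem _ _ (by omega)]
  exact hβ _ (List.getElem_mem _)

lemma part_le_length {β : List ℕ} {j : ℕ} (h : 1 ≤ part β j) : j ≤ β.length := by
  by_contra hc
  unfold part at h
  rw [List.getD_eq_default _ _ (by omega)] at h
  omega

lemma part_mem {β : List ℕ} {j : ℕ} (h1 : 1 ≤ j) (hp : 1 ≤ part β j) : part β j ∈ β := by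
  have h2 := part_le_length hp
  unfold part
  rw [List.getD_eq_getElem _ _ (by omega)]
  exact List.getElem_mem _

lemma part_cons {b : ℕ} {rest : List ℕ} {j : ℕ} (h : 2 ≤ j) :
    part (b :: rest) j = part rest (j - 1) := by
  unfold part
  obtain ⟨j', rfl⟩ : ∃ j', j = j' + 2 := ⟨j - 2, by omega⟩
  simp [List.getD]

lemma sorted_head {b : ℕ} {rest : List ℕ} (hs : (b :: rest).Pairwise (· ≥ ·)) {j : ℕ}
    (h1 : 1 ≤ j) (hp : 1 ≤ part rest j) : part rest j ≤ b := by
  have := part_mem h1 hp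
  exact List.rel_of_pairwise_cons hs this

lemma copies : ∀ (β : List ℕ), β.Pairwise (· ≥ ·) → ∀ a c x, 1 ≤ a → a ≤ c →
    part β a = x → part β c = x → 1 ≤ x → c - a + 1 ≤ β.count x := by
  intro β
  induction β with
  | nil =>
    intro _ a c x _ _ _ hc hx
    unfold part at hc
    simp [List.getD] at hc
    omega
  | cons b rest ih =>
    intro hs a c x ha hac hpa hpc hx
    have hsr : rest.Pairwise (· ≥ ·) := List.Pairwise.of_cons hs
    rcases Nat.lt_or_ge a 2 with h2 | h2
    · -- a = 1
      have ha1 : a = 1 := by omega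
      subst ha1
      have hb : b = x := by
        unfold part at hpa; simpa [List.getD] using hpa
      rw [List.count_cons]
      rcases Nat.lt_or_ge c 2 with hc2 | hc2
      · simp [hb]
        omega
      · have hpc' : part rest (c - 1) = x := by
          rw [← part_cons hc2]; exact hpc
        have hr1pos : 1 ≤ part rest 1 := by
          have h1 := part_mono hsr (show 1 ≤ (1:ℕ) from le_rfl) (show 1 ≤ c - 1 by omega)
          omega
        have hr1b : part rest 1 ≤ b := sorted_head hs le_rfl hr1pos
        have hr1x : part rest 1 = x := by
          have h1 := part_mono hsr (show 1 ≤ (1:ℕ) from le_rfl) (show 1 ≤ c - 1 by omega)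
          omega
        have := ih hsr 1 (c - 1) x le_rfl (by omega) hr1x hpc' hx
        simp [hb]
        omega
    · have hpa' : part rest (a - 1) = x := by rw [← part_cons h2]; exact hpa
      have hpc' : part rest (c - 1) = x := by rw [← part_cons (by omega)]; exact hpc
      have := ih hsr (a - 1) (c - 1) x (by omega) (by omega) hpa' hpc' hx
      rw [List.count_cons]
      omega


def Cond (bk : Option ℕ) (l i b b1 b3 : ℕ) : Prop :=
  (l % 2 = 0 ∧ bk.getD (b + 3) ≤ b + 2) ∨
  (l % 2 = 0 ∧ i % 2 = 1 ∧ b1 ≤ 1) ∨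
  (l % 2 = 0 ∧ i % 2 = 1 ∧ b1 ≤ b3 + 2 ∧ b3 ≠ 0 ∧ b3 + 3 ≤ b)

instance condDec (bk : Option ℕ) (l i b b1 b3 : ℕ) : Decidable (Cond bk l i b b1 b3) := by
  unfold Cond; exact inferInstance

lemma cond_iff (bk : Option ℕ) (l i b b1 b3 : ℕ) :
    (((l % 2 == 0 && decide (bk.getD (b + 3) ≤ b + 2)) ||
      (l % 2 == 0 && i % 2 == 1 && decide (b1 ≤ 1)) ||
      (l % 2 == 0 && i % 2 == 1 && decide (b1 ≤ b3 + 2) && decide (b3 ≠ 0) &&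
        decide (b3 + 3 ≤ b))) = true)
    ↔ Cond bk l i b b1 b3 := by
  simp only [Cond, Bool.or_eq_true, Bool.and_eq_true, beq_iff_eq, decide_eq_true_eq]
  tauto

lemma fGo_cons (bk : Option ℕ) (l i b : ℕ) (rest : List ℕ) :
    fGo bk l i (b :: rest) =
      if Cond bk l i b (rest.getD 0 0) (rest.getD 2 0) then false :: fGo bk l (i + 1) rest
      else true :: fGo (some b) (l + 1) i rest := by
  have h0 : fGo bk l i (b :: rest) =
      if ((l % 2 == 0 && decide (bk.getD (b + 3) ≤ b + 2)) ||
          (l % 2 == 0 && i % 2 == 1 && decide (rest.getD 0 0 ≤ 1)) ||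
          (l % 2 == 0 && i % 2 == 1 && decide (rest.getD 0 0 ≤ rest.getD 2 0 + 2) &&
            decide (rest.getD 2 0 ≠ 0) && decide (rest.getD 2 0 + 3 ≤ b)))
      then false :: fGo bk l (i + 1) rest
      else true :: fGo (some b) (l + 1) i rest := rfl
  rw [h0]
  by_cases h : Cond bk l i b (rest.getD 0 0) (rest.getD 2 0)
  · rw [if_pos h, if_pos ((cond_iff bk l i b (rest.getD 0 0) (rest.getD 2 0)).mpr h)]
  · rw [if_neg h, if_neg (fun hc => h ((cond_iff bk l i b (rest.getD 0 0) (rest.getD 2 0)).mp hc))]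

def dGo (bk : Option ℕ) (l i : ℕ) (s : List ℕ) : List ℕ :=
  ((s.zip (fGo bk l i s)).filter (fun p => p.2 == false)).map Prod.fst

lemma dGo_nil (bk : Option ℕ) (l i : ℕ) : dGo bk l i [] = [] := rfl

lemma dGo_F {bk : Option ℕ} {l i b : ℕ} {rest : List ℕ}
    (h : Cond bk l i b (rest.getD 0 0) (rest.getD 2 0)) :
    dGo bk l i (b :: rest) = b :: dGo bk l (i + 1) rest := by
  have h1 : fGo bk l i (b :: rest) = false :: fGo bk l (i + 1) rest := by
    rw [fGo_cons, if_pos h]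
  simp [dGo, h1]

lemma dGo_T {bk : Option ℕ} {l i b : ℕ} {rest : List ℕ}
    (h : ¬ Cond bk l i b (rest.getD 0 0) (rest.getD 2 0)) :
    dGo bk l i (b :: rest) = dGo (some b) (l + 1) i rest := by
  have h1 : fGo bk l i (b :: rest) = true :: fGo (some b) (l + 1) i rest := by
    rw [fGo_cons, if_neg h]
  simp [dGo, h1]

lemma no_three {β : List ℕ} (hβ : GoodBeta β) {a c : ℕ} (ha : 1 ≤ a) (hac : a + 2 ≤ c)
    (hx : part β a = part β c) (hp : 1 ≤ part β c) : False := by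
  have hcount := copies β hβ.1.1 a c (part β c) ha (by omega) hx rfl hp
  have hmem := part_mem (show 1 ≤ c by omega) hp
  by_cases h1 : part β c = 1
  · have := hβ.2.1
    rw [h1] at hcount
    omega
  · have := (hβ.2.2.1 _ hmem h1).2
    omega

lemma no_two_ones {β : List ℕ} (hβ : GoodBeta β) {a c : ℕ} (ha : 1 ≤ a) (hac : a + 1 ≤ c)
    (hxa : part β a = 1) (hxc : part β c = 1) : False := by
  have hcount := copies β hβ.1.1 a c 1 ha (by omega) hxa hxc le_rfl
  have := hβ.2.1
  omega

lemma part_even {β : List ℕ} (hβ : GoodBeta β) {j : ℕ} (h1 : 1 ≤ j) (hp : 1 ≤ part β j)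
    (hne : part β j ≠ 1) : 2 ∣ part β j :=
  (hβ.2.2.1 _ (part_mem h1 hp) hne).1

def Chain : Option ℕ → ℕ → List ℕ → Prop
  | _, _, [] => True
  | u, i, v :: t =>
    if i % 2 = 1 then Chain (some v) (i + 1) t
    else (∀ u0, u = some u0 → v + 3 ≤ u0) ∧ Chain none (i + 1) t

lemma chain_nil (u : Option ℕ) (i : ℕ) : Chain u i [] := trivial

lemma chain_cons_odd {u : Option ℕ} {i v : ℕ} {t : List ℕ} (hi : i % 2 = 1)
    (h : Chain (some v) (i + 1) t) : Chain u i (v :: t) := by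
  show if i % 2 = 1 then Chain (some v) (i + 1) t
    else (∀ u0, u = some u0 → v + 3 ≤ u0) ∧ Chain none (i + 1) t
  rw [if_pos hi]; exact h

lemma chain_cons_even {u : Option ℕ} {i v : ℕ} {t : List ℕ} (hi : i % 2 = 0)
    (h1 : ∀ u0, u = some u0 → v + 3 ≤ u0) (h : Chain none (i + 1) t) : Chain u i (v :: t) := by
  show if i % 2 = 1 then Chain (some v) (i + 1) t
    else (∀ u0, u = some u0 → v + 3 ≤ u0) ∧ Chain none (i + 1) t
  rw [if_neg (by omega)]; exact ⟨h1, h⟩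

lemma chain_pairs : ∀ (d : List ℕ) (u : Option ℕ) (n t : ℕ), Chain u n d →
    (n + t) % 2 = 0 → 1 ≤ t → 1 ≤ d.getD t 0 → d.getD t 0 + 3 ≤ d.getD (t - 1) 0 := by
  intro d
  induction d with
  | nil =>
    intro u n t _ _ _ hpos
    simp [List.getD] at hpos
  | cons v rest ih =>
    intro u n t hch hpar ht hpos
    have hch' : if n % 2 = 1 then Chain (some v) (n + 1) rest
        else (∀ u0, u = some u0 → v + 3 ≤ u0) ∧ Chain none (n + 1) rest := hch
    obtain ⟨t, rfl⟩ : ∃ t', t = t' + 1 := ⟨t - 1, by omega⟩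
    rcases Nat.eq_zero_or_pos t with rfl | ht'
    · have hn : n % 2 = 1 := by omega
      rw [if_pos hn] at hch'
      cases rest with
      | nil => simp [List.getD] at hpos
      | cons w rest2 =>
        have hch2 : if (n + 1) % 2 = 1 then Chain (some w) (n + 2) rest2
            else (∀ u0, some v = some u0 → w + 3 ≤ u0) ∧ Chain none (n + 2) rest2 := hch'
        rw [if_neg (by omega)] at hch2
        have := hch2.1 v rfl
        simpa [List.getD] using this
    · have hnext : ∃ u', Chain u' (n + 1) rest := by
        by_cases hn : n % 2 = 1
        · rw [if_pos hn] at hch'; exact ⟨_, hch'⟩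
        · rw [if_neg hn] at hch'; exact ⟨_, hch'.2⟩
      obtain ⟨u', hch2⟩ := hnext
      obtain ⟨r, rfl⟩ : ∃ r, t = r + 1 := ⟨t - 1, by omega⟩
      simp only [List.getD_cons_succ] at hpos
      have h := ih u' (n + 1) (r + 1) hch2 (by omega) (by omega) hpos
      rw [show r + 1 + 1 - 1 = r + 1 by omega]
      simp only [List.getD_cons_succ]
      rw [show r + 1 - 1 = r by omega] at h
      exact h

lemma chain_diffCond {d : List ℕ} (h : Chain none 0 d) : DiffCond d := by
  intro i hi hpar hp
  have e1 : part d (i + 1) = d.getD i 0 := by simp [part]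
  have e2 : part d i = d.getD (i - 1) 0 := by simp [part]
  have := chain_pairs d none 0 i h (by omega) (by omega) (by omega)
  omega


lemma main (β : List ℕ) (hβ : GoodBeta β) :
    ∀ (n : ℕ) (s : List ℕ) (bk u : Option ℕ) (l i q : ℕ),
      s.length ≤ n → β.drop q = s → q % 2 = i % 2 → l % 2 = 0 →
      (∀ k, bk = some k → ∃ j, 2 ≤ j ∧ j ≤ q ∧ part β j = k ∧
        (j % 2 = 1 → ¬(part β j ≤ part β (j + 2) + 2 ∧ part β (j + 2) ≠ 0 ∧
          part β (j + 2) + 3 ≤ part β (j - 1)))) →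
      (∀ u0, u = some u0 → i % 2 = 0 ∧ ∃ m, m % 2 = 0 ∧ 1 ≤ m ∧ m ≤ q ∧
        part β m = u0 ∧
        (q = m → ∀ k, bk = some k → ∃ j, 2 ≤ j ∧ j ≤ m - 1 ∧ part β j = k ∧
          (j % 2 = 1 → ¬(part β j ≤ part β (j + 2) + 2 ∧ part β (j + 2) ≠ 0 ∧
            part β (j + 2) + 3 ≤ part β (j - 1))))) →
      BadSeq β ∨ Chain u i (dGo bk l i s) := by
  have hsort := hβ.1.1
  have hposs := hβ.1.2
  intro n
  induction n with
  | zero =>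
    intro s bk u l i q hlen _ _ _ _ _
    have hs0 : s = [] := List.eq_nil_of_length_eq_zero (by omega)
    subst hs0
    exact Or.inr (chain_nil u i)
  | succ n IH =>
    intro s bk u l i q hlen hs hq hl hbk hu
    cases s with
    | nil => exact Or.inr (chain_nil u i)
    | cons b rest =>
      have hlen' : rest.length ≤ n := by simp at hlen; omega
      have hqlen : q < β.length := by
        by_contra hc
        have h0 : β.drop q = [] := List.drop_eq_nil_of_le (by omega)
        rw [hs] at h0
        simp at h0
      have hrest : β.drop (q + 1) = rest := by
        have h0 : List.drop 1 (List.drop q β) = List.drop (q + 1) β := List.drop_drop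
        rw [hs] at h0
        simp at h0
        exact h0.symm
      have hpb : part β (q + 1) = b := by
        have h0 := part_drop β q 0
        rw [hs] at h0
        simpa using h0
      have hpb1 : part β (q + 2) = rest.getD 0 0 := by
        have h0 := part_drop β (q + 1) 0
        rw [hrest] at h0
        rw [show q + 1 + 0 + 1 = q + 2 by omega] at h0
        exact h0
      have hpb3 : part β (q + 4) = rest.getD 2 0 := by
        have h0 := part_drop β (q + 1) 2
        rw [hrest] at h0
        rw [show q + 1 + 2 + 1 = q + 4 by omega] at h0
        exact h0
      have hbpos : 1 ≤ b := by
        rw [← hpb]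
        exact part_pos hposs (by omega) (by omega)
      by_cases hcond : Cond bk l i b (rest.getD 0 0) (rest.getD 2 0)
      · -- F step
        rw [dGo_F hcond]
        by_cases hi : i % 2 = 1
        · -- emitted at odd i: becomes pending
          have hIH := IH rest bk (some b) l (i + 1) (q + 1) hlen' hrest (by omega) hl
            (fun k hk => by
              obtain ⟨j, h1, h2, h3, h4⟩ := hbk k hk
              exact ⟨j, h1, by omega, h3, h4⟩)
            (fun u0 hu0 => by
              have hbu0 : b = u0 := by injection hu0
              subst hbu0
              refine ⟨by omega, q + 1, by omega, by omega, le_rfl, hpb, ?_⟩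
              intro _ k hk
              obtain ⟨j, h1, h2, h3, h4⟩ := hbk k hk
              exact ⟨j, h1, by omega, h3, h4⟩)
          rcases hIH with h | h
          · exact Or.inl h
          · exact Or.inr (chain_cons_odd hi h)
        · -- emitted at even i: discharge
          have hi0 : i % 2 = 0 := by omega
          have hIH := IH rest bk none l (i + 1) (q + 1) hlen' hrest (by omega) hl
            (fun k hk => by
              obtain ⟨j, h1, h2, h3, h4⟩ := hbk k hk
              exact ⟨j, h1, by omega, h3, h4⟩)
            (fun u0 hu0 => by exact absurd hu0 (by simp))
          rcases hIH with h | hch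
          · exact Or.inl h
          by_cases hsafe : ∀ u0, u = some u0 → b + 3 ≤ u0
          · exact Or.inr (chain_cons_even hi0 hsafe hch)
          · left
            push_neg at hsafe
            obtain ⟨u0, hu0, hviol⟩ := hsafe
            obtain ⟨-, m, hm2, hm1, hmq, hmu, hsnap⟩ := hu u0 hu0
            have hkc : ∃ k, bk = some k ∧ k ≤ b + 2 := by
              rcases hcond with ⟨-, h⟩ | ⟨-, hodd, -⟩ | ⟨-, hodd, -, -, -⟩
              · cases bk with
                | none => simp at h
                | some k => exact ⟨k, rfl, by simpa using h⟩
              · omega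
              · omega
            obtain ⟨k, hbkk, hkb⟩ := hkc
            have hbu : b ≤ u0 := by
              rw [← hmu, ← hpb]
              exact part_mono hsort hm1 (by omega)
            have hu0ne1 : u0 ≠ 1 := by
              intro h1
              exact no_two_ones hβ hm1 (show m + 1 ≤ q + 1 by omega) (by rw [hmu]; exact h1)
                (by rw [hpb]; omega)
            have hu0even : 2 ∣ u0 := by
              have h0 := part_even hβ hm1 (by rw [hmu]; omega) (by rw [hmu]; exact hu0ne1)
              rwa [hmu] at h0
            have hu02 : 2 ≤ u0 := by omega
            have hbeo : b = 1 ∨ 2 ∣ b := by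
              by_cases h1 : b = 1
              · exact Or.inl h1
              · right
                have h0 := part_even hβ (show 1 ≤ q + 1 by omega) (by rw [hpb]; omega)
                  (by rw [hpb]; exact h1)
                rwa [hpb] at h0
            rcases (show q = m ∨ q = m + 2 ∨ m + 4 ≤ q by omega) with hqm | hqm | hqm
            · -- fresh case: q = m
              have hmeq : m = q := by omega
              subst hmeq
              obtain ⟨j, hj2, hjm, hjk, hjneg⟩ := hsnap rfl k hbkk
              have hku : u0 ≤ k := by
                rw [← hmu, ← hjk]
                exact part_mono hsort (by omega) (by omega)
              have hkeven : 2 ∣ k := by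
                have h0 := part_even hβ (show 1 ≤ j by omega) (by rw [hjk]; omega)
                  (by rw [hjk]; omega)
                rwa [hjk] at h0
              have hq2 : 2 ≤ m := by omega
              have hcases : (b = u0 ∧ k = u0) ∨ (b = u0 ∧ k = u0 + 2) ∨
                  (b + 2 = u0 ∧ k = u0) ∨ (b = 1 ∧ u0 = 2 ∧ k = 2) := by
                rcases hbeo with h1 | h1 <;> omega
              rcases hcases with ⟨hb1, hk1⟩ | ⟨hb1, hk1⟩ | ⟨hb1, hk1⟩ | ⟨hb1, hu1, hk1⟩
              · -- b = u0, k = u0 : three copies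
                exact (no_three hβ (show 1 ≤ j by omega) (show j + 2 ≤ m + 1 by omega)
                  (by rw [hjk, hpb]; omega) (by rw [hpb]; omega)).elim
              · -- b = u0, k = u0 + 2
                have hPm1a : part β (m - 1) ≤ k := by
                  rw [← hjk]
                  exact part_mono hsort (by omega) (by omega)
                have hPm1b : u0 ≤ part β (m - 1) := by
                  rw [← hmu]
                  exact part_mono hsort (by omega) (by omega)
                have hPm1 : part β (m - 1) = u0 ∨ part β (m - 1) = u0 + 2 := by
                  by_cases h1 : part β (m - 1) = 1
                  · omega
                  · have h0 := part_even hβ (show 1 ≤ m - 1 by omega) (by omega) h1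
                    omega
                rcases hPm1 with hP | hP
                · exact (no_three hβ (show 1 ≤ m - 1 by omega) (show m - 1 + 2 ≤ m + 1 by omega)
                    (by rw [hpb]; omega) (by rw [hpb]; omega)).elim
                · rcases (show j = m - 1 ∨ j ≤ m - 2 by omega) with hjc | hjc
                  · have hneg := hjneg (by omega)
                    rw [show j + 2 = m + 1 by omega, show j - 1 = m - 2 by omega, hjk, hpb] at hneg
                    have hPm2a : part β (m - 2) ≤ u0 + 2 := by
                      by_contra hc
                      exact hneg ⟨by omega, by omega, by omega⟩
                    have hPm2b : part β (m - 1) ≤ part β (m - 2) :=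
                      part_mono hsort (by omega) (by omega)
                    refine ⟨m - 2, by omega, by omega, ?_, ?_, ?_, ?_⟩ <;>
                      simp only [show m - 2 + 1 = m - 1 from by omega,
                        show m - 2 + 2 = m from by omega,
                        show m - 2 + 3 = m + 1 from by omega] <;> omega
                  · have hPm2a : part β (m - 2) ≤ k := by
                      rw [← hjk]
                      exact part_mono hsort (by omega) (by omega)
                    have hPm2b : part β (m - 1) ≤ part β (m - 2) :=
                      part_mono hsort (by omega) (by omega)
                    rcases (show j = m - 2 ∨ j + 2 ≤ m - 1 by omega) with hjc2 | hjc2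
                    · refine ⟨m - 2, by omega, by omega, ?_, ?_, ?_, ?_⟩ <;>
                        simp only [show m - 2 + 1 = m - 1 from by omega,
                          show m - 2 + 2 = m from by omega,
                          show m - 2 + 3 = m + 1 from by omega] <;> omega
                    · exact (no_three hβ (show 1 ≤ j by omega) hjc2
                        (by rw [hjk]; omega) (by omega)).elim
              · -- b + 2 = u0, k = u0
                have hPm1 : part β (m - 1) = u0 := by
                  have h1 : part β (m - 1) ≤ k := by
                    rw [← hjk]
                    exact part_mono hsort (by omega) (by omega)
                  have h2 : u0 ≤ part β (m - 1) := by
                    rw [← hmu]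
                    exact part_mono hsort (by omega) (by omega)
                  omega
                rcases (show j = m - 1 ∨ j + 2 ≤ m by omega) with hjc | hjc
                · have hneg := hjneg (by omega)
                  rw [show j + 2 = m + 1 by omega, show j - 1 = m - 2 by omega, hjk, hpb] at hneg
                  have hPm2a : part β (m - 2) ≤ b + 2 := by
                    by_contra hc
                    exact hneg ⟨by omega, by omega, by omega⟩
                  have hPm2b : part β (m - 1) ≤ part β (m - 2) :=
                    part_mono hsort (by omega) (by omega)
                  exact (no_three hβ (show 1 ≤ m - 2 by omega) (show m - 2 + 2 ≤ m by omega)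
                    (by rw [hmu]; omega) (by rw [hmu]; omega)).elim
                · exact (no_three hβ (show 1 ≤ j by omega) hjc
                    (by rw [hjk, hmu]; omega) (by rw [hmu]; omega)).elim
              · -- b = 1, u0 = 2, k = 2
                have hPm1 : part β (m - 1) = 2 := by
                  have h1 : part β (m - 1) ≤ k := by
                    rw [← hjk]
                    exact part_mono hsort (by omega) (by omega)
                  have h2 : u0 ≤ part β (m - 1) := by
                    rw [← hmu]
                    exact part_mono hsort (by omega) (by omega)
                  omega
                rcases (show j = m - 1 ∨ j + 2 ≤ m by omega) with hjc | hjc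
                · have hneg := hjneg (by omega)
                  rw [show j + 2 = m + 1 by omega, show j - 1 = m - 2 by omega, hjk, hpb] at hneg
                  have hPm2a : part β (m - 2) ≤ 3 := by
                    by_contra hc
                    exact hneg ⟨by omega, by omega, by omega⟩
                  have hPm2b : part β (m - 1) ≤ part β (m - 2) :=
                    part_mono hsort (by omega) (by omega)
                  have hPm2 : part β (m - 2) = 2 := by
                    by_cases h1 : part β (m - 2) = 1
                    · omega
                    · have h0 := part_even hβ (show 1 ≤ m - 2 by omega) (by omega) h1
                      omega
                  exact (no_three hβ (show 1 ≤ m - 2 by omega) (show m - 2 + 2 ≤ m by omega)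
                    (by rw [hmu]; omega) (by rw [hmu]; omega)).elim
                · exact (no_three hβ (show 1 ≤ j by omega) hjc
                    (by rw [hjk, hmu]; omega) (by rw [hmu]; omega)).elim
            · -- q = m + 2
              have hP1a : part β (m + 1) ≤ u0 := by
                rw [← hmu]
                exact part_mono hsort hm1 (by omega)
              have hP2a : part β (m + 2) ≤ part β (m + 1) :=
                part_mono hsort (by omega) (by omega)
              have hP2b : b ≤ part β (m + 2) := by
                rw [← hpb]
                exact part_mono hsort (by omega) (by omega)
              have hP3 : part β (m + 3) = b := by
                rw [show m + 3 = q + 1 by omega]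
                exact hpb
              rcases (show u0 = 2 ∨ 4 ≤ u0 by omega) with hu4 | hu4
              · by_cases hc2 : part β (m + 2) = 2
                · exact (no_three hβ hm1 (show m + 2 ≤ m + 2 from le_rfl)
                    (by rw [hmu]; omega) (by omega)).elim
                · have h1 : part β (m + 2) = 1 := by
                    by_cases h1 : part β (m + 2) = 1
                    · exact h1
                    · have h0 := part_even hβ (show 1 ≤ m + 2 by omega) (by omega) h1
                      omega
                  exact (no_two_ones hβ (show 1 ≤ m + 2 by omega)
                    (show m + 2 + 1 ≤ m + 3 by omega) h1 (by omega)).elim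
              · have hP1e : part β (m + 1) = u0 ∨ part β (m + 1) = u0 - 2 := by
                  by_cases h1 : part β (m + 1) = 1
                  · omega
                  · have h0 := part_even hβ (show 1 ≤ m + 1 by omega) (by omega) h1
                    omega
                rcases hP1e with hA | hA
                · have hP2e : part β (m + 2) = u0 ∨ part β (m + 2) = u0 - 2 := by
                    by_cases h1 : part β (m + 2) = 1
                    · omega
                    · have h0 := part_even hβ (show 1 ≤ m + 2 by omega) (by omega) h1
                      omega
                  rcases hP2e with hB | hB
                  · exact (no_three hβ hm1 (show m + 2 ≤ m + 2 from le_rfl)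
                      (by rw [hmu]; omega) (by omega)).elim
                  · refine ⟨m, by omega, hm2, ?_, ?_, ?_, ?_⟩ <;> omega
                · exact (no_three hβ (show 1 ≤ m + 1 by omega)
                    (show m + 1 + 2 ≤ m + 3 by omega) (by omega) (by omega)).elim
            · -- m + 4 ≤ q
              have hP2a : part β (m + 2) ≤ u0 := by
                rw [← hmu]
                exact part_mono hsort hm1 (by omega)
              have hP2b : b ≤ part β (m + 2) := by
                rw [← hpb]
                exact part_mono hsort (by omega) (by omega)
              have hP3b : b ≤ part β (m + 3) := by
                rw [← hpb]
                exact part_mono hsort (by omega) (by omega)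
              have hP3a : part β (m + 3) ≤ part β (m + 2) :=
                part_mono hsort (by omega) (by omega)
              have hP4a : part β (m + 4) ≤ part β (m + 2) :=
                part_mono hsort (by omega) (by omega)
              have hP4b : b ≤ part β (m + 4) := by
                rw [← hpb]
                exact part_mono hsort (by omega) (by omega)
              rcases (show u0 = 2 ∨ 4 ≤ u0 by omega) with hu4 | hu4
              · by_cases hc2 : part β (m + 2) = 2
                · exact (no_three hβ hm1 (show m + 2 ≤ m + 2 from le_rfl)
                    (by rw [hmu]; omega) (by omega)).elim
                · have h1 : part β (m + 2) = 1 := by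
                    by_cases h1 : part β (m + 2) = 1
                    · exact h1
                    · have h0 := part_even hβ (show 1 ≤ m + 2 by omega) (by omega) h1
                      omega
                  have h2 : part β (m + 3) = 1 := by omega
                  exact (no_two_ones hβ (show 1 ≤ m + 2 by omega)
                    (show m + 2 + 1 ≤ m + 3 by omega) h1 h2).elim
              · have hP2e : part β (m + 2) = u0 ∨ part β (m + 2) = u0 - 2 := by
                  by_cases h1 : part β (m + 2) = 1
                  · omega
                  · have h0 := part_even hβ (show 1 ≤ m + 2 by omega) (by omega) h1
                    omega
                rcases hP2e with hB | hB
                · exact (no_three hβ hm1 (show m + 2 ≤ m + 2 from le_rfl)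
                    (by rw [hmu]; omega) (by omega)).elim
                · have hP4e : part β (m + 4) = u0 - 2 := by
                    by_cases h1 : part β (m + 4) = 1
                    · omega
                    · have h0 := part_even hβ (show 1 ≤ m + 4 by omega) (by omega) h1
                      omega
                  exact (no_three hβ (show 1 ≤ m + 2 by omega)
                    (show m + 2 + 2 ≤ m + 4 by omega) (by omega) (by omega)).elim
      · -- T step
        rw [dGo_T hcond]
        cases rest with
        | nil => exact Or.inr (chain_nil u i)
        | cons b1 rest2 =>
          have hlodd : ¬ Cond (some b) (l + 1) i b1 (rest2.getD 0 0) (rest2.getD 2 0) := by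
            intro h
            rcases h with ⟨h, -⟩ | ⟨h, -⟩ | ⟨h, -⟩ <;> omega
          rw [dGo_T hlodd]
          have hrest2 : β.drop (q + 2) = rest2 := by
            have h0 : List.drop 1 (List.drop (q + 1) β) = List.drop (q + 1 + 1) β :=
              List.drop_drop
            rw [hrest] at h0
            simp at h0
            rw [show q + 2 = q + 1 + 1 by omega]
            exact h0.symm
          have hpb1' : part β (q + 2) = b1 := by
            rw [hpb1]; rfl
          have hIH := IH rest2 (some b1) u (l + 1 + 1) i (q + 2) (by simp at hlen; omega)
            hrest2 (by omega) (by omega)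
            (fun k hk => by
              have hk1 : b1 = k := by injection hk
              subst hk1
              refine ⟨q + 2, by omega, le_rfl, hpb1', ?_⟩
              intro hodd hcontra
              apply hcond
              right; right
              rw [show q + 2 + 2 = q + 4 by omega, show q + 2 - 1 = q + 1 by omega] at hcontra
              refine ⟨hl, by omega, ?_, ?_, ?_⟩
              · rw [← hpb1, ← hpb3]; omega
              · rw [← hpb3]; omega
              · rw [← hpb3]; omega)
            (fun u0 h0 => by
              obtain ⟨hie, m, h1, h2, h3, h4, h5⟩ := hu u0 h0
              exact ⟨hie, m, h1, h2, by omega, h4, fun hqq => absurd hqq (by omega)⟩)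
          exact hIH


/-- If `δ` violates the difference condition, then `β` has a bad sequence. -/
theorem stmt5 (β : List ℕ) (hβ : GoodBeta β) (hd : ¬ DiffCond (delta β)) :
    BadSeq β := by
  rcases main β hβ β.length β none none 0 0 0 le_rfl List.drop_zero rfl rfl
    (fun k hk => nomatch hk) (fun u0 h0 => nomatch h0) with h | h
  · exact h
  · exact absurd (chain_diffCond (show Chain none 0 (delta β) from h)) hd

end Duckworth
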